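/- arXiv:2112.04118 — 2 statements merged into one kernel-verified Lean document; each statement's English description precedes it below -/
import Mathlib

section
/- Let G(D) = (g_{ij}(D)) be a k×n matrix over F[D] of rank k (over the field of rational functions F(D)), and define the matrix of highest order coefficients Ḡ ∈ F^{k×n} by Ḡ_{ij} = the coefficient of D^{ν_i} in g_{ij}(D), where ν_i = max_{1≤j≤n} deg g_{ij}(D). Then G(D) is minimal if and only if Ḡ has rank k. -/
/-!
If the rows of `Ḡ` satisfy a dependency `c`, let `i₀` maximise `ν_i` among the rows with
`c_i ≠ 0`. Replacing row `i₀` by `Σ_i c_i D^(ν_{i₀} - ν_i) g_i` is a unimodular row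
operation that cancels the coefficients of `D^ν_{i₀}`, so it lowers `ν_{i₀}` without
changing the code.

If `Ḡ` has rank `k`, then `G` has the predictable degree property
`deg (u G) = max_i (deg u_i + ν_i)`. Any other generator matrix of the code is `G' = T G` with
`T` unimodular; a nonzero term of `det T` is a permutation `σ` with `t_{σ(i) i} ≠ 0`, and the
predictable degree property gives `ν_i ≤ ν'_{σ(i)}`, whence `ν ≤ ν'`.
-/

open Polynomial Matrix

/-- The `i`-th row degree `ν_i = max_j deg g_{ij}(D)` of a polynomial matrix. -/
noncomputable def rowDeg {F : Type*} [Field F] {k n : ℕ}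
    (G : Matrix (Fin k) (Fin n) (Polynomial F)) (i : Fin k) : ℕ :=
  Finset.univ.sup fun j => (G i j).natDegree

/-- The overall constraint length `ν = Σ_i ν_i` of a polynomial matrix. -/
noncomputable def constraintLen {F : Type*} [Field F] {k n : ℕ}
    (G : Matrix (Fin k) (Fin n) (Polynomial F)) : ℕ :=
  ∑ i, rowDeg G i

/-- A generator matrix is minimal if its overall constraint length is minimal among all
generator matrices of the code it generates. -/
def IsMinimalGen {F : Type*} [Field F] {k n : ℕ}
    (G : Matrix (Fin k) (Fin n) (Polynomial F)) : Prop :=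
  ∀ G' : Matrix (Fin k) (Fin n) (Polynomial F),
    LinearMap.range (Matrix.vecMulLinear G') = LinearMap.range (Matrix.vecMulLinear G) →
    constraintLen G ≤ constraintLen G'

namespace Matrix

variable {R : Type*} {l m n : Type*} [Fintype m]

theorem rank_eq_card_iff_injective_vecMul [Fintype n] {K : Type*} [Field K] {A : Matrix m n K} :
    A.rank = Fintype.card m ↔ Function.Injective A.vecMul := by
  rw [vecMul_injective_iff, rank_eq_finrank_span_row, linearIndependent_iff_card_eq_finrank_span,
    Set.finrank, eq_comm]

theorem injective_vecMul_of_injective_vecMul_map {S : Type*} [CommSemiring R] [CommSemiring S]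
    {f : R →+* S} (hf : Function.Injective f) {A : Matrix m n R}
    (hA : Function.Injective (A.map f).vecMul) : Function.Injective A.vecMul := by
  have map_vecMul : ∀ v, (f ∘ v) ᵥ* A.map f = f ∘ (v ᵥ* A) :=
    fun v => funext fun j => (RingHom.map_vecMul f A v j).symm
  intro u v huv
  refine hf.comp_left (hA ?_)
  simp only [map_vecMul, huv]

theorem exists_mul_eq_of_range_vecMulLinear_le [Fintype l] [CommSemiring R] {A : Matrix m n R}
    {B : Matrix l n R} (h : LinearMap.range B.vecMulLinear ≤ LinearMap.range A.vecMulLinear) :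
    ∃ T : Matrix l m R, B = T * A := by
  have hrow : ∀ i, ∃ t, t ᵥ* A = B i := fun i => by
    classical
    exact h ⟨Pi.single i 1, by simp [single_vecMul, row]⟩
  choose T hT using hrow
  exact ⟨T, funext fun i => (hT i).symm⟩

theorem eq_of_mul_eq_mul_of_injective_vecMul [CommSemiring R] {A : Matrix m n R}
    (hA : Function.Injective A.vecMul) {S T : Matrix l m R} (h : S * A = T * A) : S = T :=
  funext fun i => hA (congrFun h i)

theorem exists_isUnit_det_of_range_vecMulLinear_eq [DecidableEq m] [CommRing R]
    {A B : Matrix m n R}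
    (hA : Function.Injective A.vecMul)
    (h : LinearMap.range B.vecMulLinear = LinearMap.range A.vecMulLinear) :
    ∃ T : Matrix m m R, IsUnit T.det ∧ B = T * A := by
  obtain ⟨T, rfl⟩ := exists_mul_eq_of_range_vecMulLinear_le h.le
  obtain ⟨S, hS⟩ := exists_mul_eq_of_range_vecMulLinear_le h.ge
  have hST : S * T = 1 :=
    eq_of_mul_eq_mul_of_injective_vecMul hA (by rw [Matrix.mul_assoc, ← hS, Matrix.one_mul])
  exact ⟨T, IsUnit.of_mul_eq_one_right _ (by rw [← det_mul, hST, det_one]), rfl⟩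

theorem range_vecMulLinear_mul_of_isUnit_det [DecidableEq m] [CommRing R] {M : Matrix m m R}
    (hM : IsUnit M.det) (A : Matrix m n R) :
    LinearMap.range (M * A).vecMulLinear = LinearMap.range A.vecMulLinear := by
  have hcomp : (M * A).vecMulLinear = A.vecMulLinear ∘ₗ M.vecMulLinear :=
    LinearMap.ext fun v => (vecMul_vecMul v M A).symm
  rw [hcomp, LinearMap.range_comp_of_range_eq_top]
  exact LinearMap.range_eq_top.mpr
    (vecMul_surjective_iff_isUnit.mpr ((isUnit_iff_isUnit_det M).mpr hM))

theorem updateRow_vecMul_eq_mul [DecidableEq m] [CommSemiring R] (A : Matrix m n R) (i : m)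
    (u : m → R) :
    A.updateRow i (u ᵥ* A) = (1 : Matrix m m R).updateRow i u * A := by
  ext r j
  rcases eq_or_ne r i with rfl | hr
  · simp [vecMul, mul_apply, dotProduct]
  · simp [updateRow_ne hr, mul_apply, one_apply]

theorem det_one_updateRow [DecidableEq m] [CommRing R] (i : m) (u : m → R) :
    ((1 : Matrix m m R).updateRow i u).det = u i := by
  have hu : ∑ r, u r • (1 : Matrix m m R) r = u := by
    ext j; simp [Finset.sum_apply, one_apply]
  simpa [hu] using det_updateRow_sum (1 : Matrix m m R) i u

theorem range_vecMulLinear_updateRow_vecMul [DecidableEq m] [CommRing R] (A : Matrix m n R)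
    {i : m} {u : m → R} (hu : IsUnit (u i)) :
    LinearMap.range (A.updateRow i (u ᵥ* A)).vecMulLinear = LinearMap.range A.vecMulLinear := by
  rw [updateRow_vecMul_eq_mul]
  exact range_vecMulLinear_mul_of_isUnit_det (by rwa [det_one_updateRow]) A

theorem exists_perm_forall_ne_zero_of_det_ne_zero [DecidableEq m] [CommRing R] {M : Matrix m m R}
    (h : M.det ≠ 0) : ∃ σ : Equiv.Perm m, ∀ i, M (σ i) i ≠ 0 := by
  by_contra! hzero
  refine h ((det_apply M).trans (Finset.sum_eq_zero fun σ _ => ?_))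
  obtain ⟨i, hi⟩ := hzero σ
  rw [Finset.prod_eq_zero (f := fun j => M (σ j) j) (Finset.mem_univ i) hi, smul_zero]

end Matrix

section RowDegree

variable {F : Type*} [Field F] {k n : ℕ}

noncomputable def highestCoeffMatrix (G : Matrix (Fin k) (Fin n) F[X]) :
    Matrix (Fin k) (Fin n) F :=
  Matrix.of fun i j => (G i j).coeff (rowDeg G i)

theorem natDegree_le_rowDeg (G : Matrix (Fin k) (Fin n) F[X]) (i : Fin k) (j : Fin n) :
    (G i j).natDegree ≤ rowDeg G i :=
  Finset.le_sup (f := fun j => (G i j).natDegree) (Finset.mem_univ j)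

theorem natDegree_vecMul_le {G : Matrix (Fin k) (Fin n) F[X]} {w : Fin k → F[X]} {e : ℕ}
    (hw : ∀ l, w l ≠ 0 → (w l).natDegree + rowDeg G l ≤ e) (j : Fin n) :
    ((w ᵥ* G) j).natDegree ≤ e := by
  refine natDegree_sum_le_of_forall_le Finset.univ (fun l => w l * G l j) fun l _ => ?_
  by_cases hl : w l = 0
  · simp [hl]
  · exact natDegree_mul_le.trans
      ((Nat.add_le_add_left (natDegree_le_rowDeg G l j) _).trans (hw l hl))

theorem coeff_vecMul_eq_vecMul_highestCoeffMatrix {G : Matrix (Fin k) (Fin n) F[X]}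
    {w : Fin k → F[X]} {e : ℕ} (hw : ∀ l, w l ≠ 0 → (w l).natDegree + rowDeg G l ≤ e)
    (j : Fin n) :
    ((w ᵥ* G) j).coeff e =
      ((fun l => (w l).coeff (e - rowDeg G l)) ᵥ* highestCoeffMatrix G) j := by
  simp only [vecMul, dotProduct, finsetSum_coeff]
  refine Finset.sum_congr rfl fun l _ => ?_
  by_cases hl : w l = 0
  · simp [hl]
  · have hle := hw l hl
    conv_lhs => rw [← Nat.sub_add_cancel (le_of_add_le_right hle)]
    exact coeff_mul_add_eq_of_natDegree_le (by omega) (natDegree_le_rowDeg G l j)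

/-- The predictable degree property. -/
theorem natDegree_add_rowDeg_le_rowDeg_mul {m : ℕ} {G : Matrix (Fin k) (Fin n) F[X]}
    (hG : Function.Injective (highestCoeffMatrix G).vecMul) (T : Matrix (Fin m) (Fin k) F[X])
    {i : Fin m} {l : Fin k} (hl : T i l ≠ 0) :
    (T i l).natDegree + rowDeg G l ≤ rowDeg (T * G) i := by
  classical
  set w := T i
  set s := Finset.univ.filter fun l => w l ≠ 0
  obtain ⟨l₀, hl₀, hmax⟩ := s.exists_max_image (fun l => (w l).natDegree + rowDeg G l)
    ⟨l, by simpa [s] using hl⟩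
  set e := (w l₀).natDegree + rowDeg G l₀
  have hw : ∀ l, w l ≠ 0 → (w l).natDegree + rowDeg G l ≤ e :=
    fun l hl => hmax l (by simpa [s] using hl)
  set c := fun l => (w l).coeff (e - rowDeg G l)
  have hc : c ≠ 0 := fun h => by
    have hwl₀ : w l₀ ≠ 0 := by simpa [s] using hl₀
    exact hwl₀ (by simpa [c, e] using congrFun h l₀)
  obtain ⟨j, hj⟩ := Function.ne_iff.mp (hG.ne hc : c ᵥ* highestCoeffMatrix G ≠ 0 ᵥ* _)
  rw [zero_vecMul, Pi.zero_apply, ← coeff_vecMul_eq_vecMul_highestCoeffMatrix hw] at hj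
  calc (T i l).natDegree + rowDeg G l ≤ e := hw l hl
    _ ≤ ((w ᵥ* G) j).natDegree := le_natDegree_of_ne_zero hj
    _ ≤ rowDeg (T * G) i := natDegree_le_rowDeg (T * G) i j

theorem rowDeg_lt_of_coeff_eq_zero {G : Matrix (Fin k) (Fin n) F[X]} {i : Fin k} {d : ℕ}
    (hi : G i ≠ 0) (hle : ∀ j, (G i j).natDegree ≤ d) (hcoeff : ∀ j, (G i j).coeff d = 0) :
    rowDeg G i < d := by
  have hlt : ∀ j, G i j ≠ 0 → (G i j).natDegree < d := fun j hj =>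
    (hle j).lt_of_ne fun h => hj (leadingCoeff_eq_zero.mp (by rw [leadingCoeff, h, hcoeff]))
  obtain ⟨j₀, hj₀⟩ := Function.ne_iff.mp hi
  have hd : 0 < d := (hlt j₀ hj₀).trans_le' (Nat.zero_le _)
  refine (Finset.sup_lt_iff hd).mpr fun j _ => ?_
  by_cases hj : G i j = 0
  · simpa [hj] using hd
  · exact hlt j hj

theorem constraintLen_updateRow_lt {G : Matrix (Fin k) (Fin n) F[X]} {i : Fin k}
    {r : Fin n → F[X]} (h : rowDeg (G.updateRow i r) i < rowDeg G i) :
    constraintLen (G.updateRow i r) < constraintLen G := by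
  refine Finset.sum_lt_sum (fun l _ => ?_) ⟨i, Finset.mem_univ i, h⟩
  rcases eq_or_ne l i with rfl | hl
  · exact h.le
  · simp [rowDeg, updateRow_ne hl]

end RowDegree

section Minimality

variable {F : Type*} [Field F] {k n : ℕ}

theorem constraintLen_le_of_range_eq {G G' : Matrix (Fin k) (Fin n) F[X]}
    (hG : Function.Injective G.vecMul) (hGbar : Function.Injective (highestCoeffMatrix G).vecMul)
    (h : LinearMap.range G'.vecMulLinear = LinearMap.range G.vecMulLinear) :
    constraintLen G ≤ constraintLen G' := by
  obtain ⟨T, hT, rfl⟩ := exists_isUnit_det_of_range_vecMulLinear_eq hG h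
  obtain ⟨σ, hσ⟩ := exists_perm_forall_ne_zero_of_det_ne_zero hT.ne_zero
  calc constraintLen G = ∑ i, rowDeg G i := rfl
    _ ≤ ∑ i, rowDeg (T * G) (σ i) := Finset.sum_le_sum fun i _ =>
        le_add_self.trans (natDegree_add_rowDeg_le_rowDeg_mul hGbar T (hσ i))
    _ = constraintLen (T * G) := Equiv.sum_comp σ _

theorem exists_range_eq_constraintLen_lt {G : Matrix (Fin k) (Fin n) F[X]}
    (hG : Function.Injective G.vecMul)
    (hGbar : ¬ Function.Injective (highestCoeffMatrix G).vecMul) :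
    ∃ G' : Matrix (Fin k) (Fin n) F[X],
      LinearMap.range G'.vecMulLinear = LinearMap.range G.vecMulLinear ∧
        constraintLen G' < constraintLen G := by
  classical
  obtain ⟨c, hc, hc0⟩ : ∃ c, c ᵥ* highestCoeffMatrix G = 0 ∧ c ≠ 0 := by
    by_contra! h
    exact hGbar ((injective_iff_map_eq_zero (highestCoeffMatrix G).vecMulLinear).mpr h)
  obtain ⟨i₀, hi₀, hmax⟩ :=
    (Finset.univ.filter fun l => c l ≠ 0).exists_max_image (rowDeg G)
      (by simpa [Finset.filter_nonempty_iff] using Function.ne_iff.mp hc0)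
  have hci₀ : c i₀ ≠ 0 := by simpa using hi₀
  -- Shifting row `l` by `D ^ (ν_{i₀} - ν_l)` aligns its top coefficients in degree `ν_{i₀}`.
  set u : Fin k → F[X] := fun l => C (c l) * X ^ (rowDeg G i₀ - rowDeg G l)
  have hu : ∀ l, u l ≠ 0 → (u l).natDegree + rowDeg G l ≤ rowDeg G i₀ := fun l hl => by
    have hcl : c l ≠ 0 := fun h => hl (by simp [u, h])
    have := hmax l (by simpa using hcl)
    exact (Nat.add_le_add_right (natDegree_C_mul_X_pow_le _ _) _).trans (by omega)
  have hui₀ : IsUnit (u i₀) := by simpa [u] using hci₀.isUnit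
  have hr : u ᵥ* G ≠ 0 := by
    rw [← zero_vecMul G]
    exact hG.ne fun h => hui₀.ne_zero (congrFun h i₀)
  refine ⟨G.updateRow i₀ (u ᵥ* G), range_vecMulLinear_updateRow_vecMul G hui₀,
    constraintLen_updateRow_lt ?_⟩
  refine rowDeg_lt_of_coeff_eq_zero (by simpa using hr)
    (fun j => by simpa using natDegree_vecMul_le hu j) fun j => ?_
  have hcoeff : (fun l => (u l).coeff (rowDeg G i₀ - rowDeg G l)) = c := by
    ext l; simp [u]
  simpa [hcoeff, hc] using coeff_vecMul_eq_vecMul_highestCoeffMatrix hu j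

end Minimality

theorem minimal_iff_highest_coeff_full_rank_general {F : Type*} [Field F] {k n : ℕ}
    (G : Matrix (Fin k) (Fin n) (Polynomial F))
    (hrank : (G.map (algebraMap (Polynomial F) (RatFunc F))).rank = k) :
    IsMinimalGen G ↔ (Matrix.of fun i j => (G i j).coeff (rowDeg G i)).rank = k := by
  have hG : Function.Injective G.vecMul :=
    injective_vecMul_of_injective_vecMul_map (IsFractionRing.injective F[X] (RatFunc F))
      (rank_eq_card_iff_injective_vecMul.mp (by rwa [Fintype.card_fin]))
  have hGbar_iff : (highestCoeffMatrix G).rank = k ↔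
      Function.Injective (highestCoeffMatrix G).vecMul := by
    rw [← rank_eq_card_iff_injective_vecMul, Fintype.card_fin]
  change _ ↔ (highestCoeffMatrix G).rank = k
  rw [hGbar_iff]
  refine ⟨fun hmin => ?_, fun hGbar G' h => constraintLen_le_of_range_eq hG hGbar h⟩
  by_contra hGbar
  obtain ⟨G', hrange, hlt⟩ := exists_range_eq_constraintLen_lt hG hGbar
  exact (hmin G' hrange).not_gt hlt

/-- A full-rank polynomial matrix `G(D)` is minimal iff its matrix of highest order
coefficients `Ḡ`, with `Ḡ_{ij} = coeff_{D^{ν_i}} g_{ij}(D)`, has rank `k`. -/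
theorem minimal_iff_highest_coeff_full_rank {F : Type*} [Field F] [Fintype F] {k n : ℕ}
    (hk : 0 < k) (hkn : k ≤ n)
    (G : Matrix (Fin k) (Fin n) (Polynomial F))
    (hrank : (G.map (algebraMap (Polynomial F) (RatFunc F))).rank = k) :
    IsMinimalGen G ↔ (Matrix.of fun i j => (G i j).coeff (rowDeg G i)).rank = k :=
  minimal_iff_highest_coeff_full_rank_general G hrank
end

section
/- Let q be a prime power, t ≥ 1, γ a primitive element of F_{q^t}, and f = (f_0, ..., f_d) ∈ F_{q^t}^{d+1} nonzero with f_d ≠ 0. Then Σ_{i=0}^{q-2} dim_{F_q} ker D_{f,γ^i} ≤ d, where ker D_{f,γ^i} = { β ∈ F_{q^t} : D_{f,γ^i}(β) = 0 }. -/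
/-- `N_0(a) = 1`, `N_{i+1}(a) = N_i(a)^q · a`. -/
def skewN (q : ℕ) {F : Type*} [Field F] : ℕ → F → F
  | 0, _ => 1
  | i + 1, a => (skewN q i a) ^ q * a

/-- `D_{f,a}(β) = Σ_i f_i N_i(β^{q-1} a) β`. -/
def Dmap (q : ℕ) {F : Type*} [Field F] {d : ℕ} (f : Fin d → F) (a β : F) : F :=
  ∑ i, f i * skewN q (i : ℕ) (β ^ (q - 1) * a) * β

/-!
Induction on `d`. If some `D_{f,γ^{i₀}}` has a nonzero root `β₀`, put `b = β₀^{q-1} γ^{i₀}`.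
Right division of `f` by `x - b` in the skew polynomial ring leaves no remainder, so
`D_{f,a} = D_{h,a} ∘ (β ↦ a β^q - b β)` for every `a`, with `deg h = d - 1`. Both maps are
additive, so `|ker D_{f,γ^i}| ≤ |ker (β ↦ γ^i β^q - b β)| · |ker D_{h,γ^i}|`. The first factor
is `1` unless `b` lies in the class `{β^{q-1} γ^i | β ≠ 0}`, which happens for exactly one
`i < q - 1` because these `γ^i` represent distinct cosets of the `(q-1)`-th powers; for that `i`
it is at most `q`. Hence `∏ᵢ q^{dims i} ≤ q^d`.
-/

section Skew

open Finset

variable {F : Type*} [Field F] (q : ℕ)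

theorem skewN_mul (i : ℕ) (a b : F) : skewN q i (a * b) = skewN q i a * skewN q i b := by
  induction i with
  | zero => simp [skewN]
  | succ i ih => simp only [skewN, ih, mul_pow]; ring

theorem skewN_succ_eq_mul_pow (i : ℕ) (a : F) : skewN q (i + 1) a = skewN q i a * a ^ q ^ i := by
  induction i with
  | zero => simp [skewN]
  | succ i ih =>
    calc skewN q (i + 2) a = (skewN q i a * a ^ q ^ i) ^ q * a := by rw [← ih]; rfl
      _ = skewN q (i + 1) a * a ^ q ^ (i + 1) := by
        rw [mul_pow, ← pow_mul, ← pow_succ, skewN]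
        ring

theorem skewN_pow_sub_one_mul {q : ℕ} (hq : q ≠ 0) (i : ℕ) (β : F) :
    skewN q i (β ^ (q - 1)) * β = β ^ q ^ i := by
  induction i with
  | zero => simp [skewN]
  | succ i ih =>
    rw [skewN, pow_succ, pow_mul, ← ih, mul_assoc, pow_sub_one_mul hq, mul_pow]

/-- The action on `F` of the skew polynomial `∑_{i ≤ e} f_i x^i`, with `x` acting by
`β ↦ a β^q`. -/
def linEval (f : ℕ → F) (e : ℕ) (a β : F) : F :=
  ∑ i ∈ range (e + 1), f i * skewN q i a * β ^ q ^ i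

theorem Dmap_eq_linEval {q : ℕ} (hq : q ≠ 0) {d : ℕ} (f : ℕ → F) (a β : F) :
    Dmap q (fun i : Fin (d + 1) => f i) a β = linEval q f d a β := by
  rw [Dmap, linEval, ← Fin.sum_univ_eq_sum_range]
  refine sum_congr rfl fun i _ => ?_
  rw [skewN_mul, ← skewN_pow_sub_one_mul hq]
  ring

theorem linEval_succ (f : ℕ → F) (e : ℕ) (a β : F) :
    linEval q f (e + 1) a β = linEval q f e a β + f (e + 1) * skewN q (e + 1) a * β ^ q ^ (e + 1) :=
  sum_range_succ _ _

theorem linEval_update_of_lt (f : ℕ → F) {e n : ℕ} (hn : e < n) (c : F) :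
    linEval q (Function.update f n c) e = linEval q f e := by
  ext a β
  refine sum_congr rfl fun i hi => ?_
  rw [Function.update_of_ne (by grind)]

theorem linEval_zero_right {q : ℕ} (hq : q ≠ 0) (f : ℕ → F) (e : ℕ) (a : F) :
    linEval q f e a 0 = 0 :=
  sum_eq_zero fun i _ => by rw [zero_pow (pow_ne_zero i hq), mul_zero]

variable {q} {p s : ℕ} [ExpChar F p]

theorem skewN_mul_pow_sub (hq : q = p ^ s) (n : ℕ) (a b β : F) :
    skewN q n a * (a * β ^ q - b * β) ^ q ^ n
      = skewN q (n + 1) a * β ^ q ^ (n + 1) - b ^ q ^ n * (skewN q n a * β ^ q ^ n) := by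
  have hfrob : (a * β ^ q - b * β) ^ q ^ n = (a * β ^ q) ^ q ^ n - (b * β) ^ q ^ n := by
    rw [hq, ← pow_mul, sub_pow_expChar_pow]
  rw [hfrob, skewN_succ_eq_mul_pow, mul_pow, mul_pow, ← pow_mul, ← pow_succ']
  ring

/-- Right division of `f` by `x - b`, with quotient `h` and remainder `r`. -/
theorem exists_linEval_eq_linEval_sub (hq : q = p ^ s) (b : F) :
    ∀ (e : ℕ) (f : ℕ → F), ∃ (h : ℕ → F) (r : F), h e = f (e + 1) ∧
      ∀ a β, linEval q f (e + 1) a β = linEval q h e a (a * β ^ q - b * β) + r * β := by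
  intro e
  induction e with
  | zero =>
    intro f
    refine ⟨fun _ => f 1, f 0 + f 1 * b, rfl, fun a β => ?_⟩
    simp only [linEval, zero_add, sum_range_succ, range_one, sum_singleton, skewN, pow_zero,
      pow_one, one_pow]
    ring
  | succ e ih =>
    intro f
    obtain ⟨h, r, -, hdiv⟩ :=
      ih (Function.update f (e + 1) (f (e + 1) + f (e + 2) * b ^ q ^ (e + 1)))
    refine ⟨Function.update h (e + 1) (f (e + 2)), r, Function.update_self .., fun a β => ?_⟩
    have hdiv := hdiv a β
    rw [linEval_succ, linEval_update_of_lt q _ (Nat.lt_succ_self e), Function.update_self]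
      at hdiv
    rw [linEval_succ q f (e + 1), linEval_succ q f e, linEval_succ q (Function.update h _ _),
      linEval_update_of_lt q _ (Nat.lt_succ_self e), Function.update_self,
      mul_assoc (f (e + 2)) (skewN q (e + 1) a), skewN_mul_pow_sub hq]
    linear_combination hdiv

end Skew

theorem AddMonoidHom.natCard_preimage_le {G H : Type*} [AddGroup G] [AddGroup H] [Finite G]
    [Finite H] (T : G →+ H) (S : Set H) :
    Nat.card (T ⁻¹' S) ≤ Nat.card T.ker * Nat.card S := by
  rw [← Nat.card_prod]
  -- a point of `T ⁻¹' S` is determined by its image and its offset from a chosen point of its fibre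
  let offset (x : G) : T.ker :=
    ⟨x - Function.invFun T (T x), by
      rw [T.mem_ker, map_sub, Function.invFun_eq (f := T) ⟨x, rfl⟩, sub_self]⟩
  refine Nat.card_le_card_of_injective (fun x => (offset x, ⟨T x, x.2⟩)) fun x y hxy => ?_
  simp only [Prod.mk.injEq, Subtype.mk.injEq, offset] at hxy
  rw [hxy.2] at hxy
  exact Subtype.ext (sub_left_inj.mp hxy.1)

theorem natCard_zeros_eq_one {M N : Type*} [Zero M] [Zero N] {φ : M → N} (h0 : φ 0 = 0)
    (h : ∀ x, x ≠ 0 → φ x ≠ 0) : Nat.card {x // φ x = 0} = 1 := by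
  have hzero (x : {x // φ x = 0}) : x.1 = 0 := not_imp_not.mp (h x) x.2
  exact Nat.card_eq_one_iff_unique.mpr
    ⟨⟨fun x y => Subtype.ext ((hzero x).trans (hzero y).symm)⟩, ⟨⟨0, h0⟩⟩⟩

open Polynomial in
theorem natCard_mul_pow_sub_mul_eq_zero_le {F : Type*} [Field F] {q : ℕ} (hq : 1 < q)
    {a : F} (ha : a ≠ 0) (b : F) : Nat.card {β : F // a * β ^ q - b * β = 0} ≤ q := by
  set P : F[X] := C a * X ^ q - C b * X
  have hP : P ≠ 0 := fun h => ha <| by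
    simpa [P, coeff_X, hq.ne] using congr_arg (coeff · q) h
  have hroots : {β : F | a * β ^ q - b * β = 0} = P.rootSet F := by
    ext β
    simp [mem_rootSet, hP, P]
  calc Nat.card {β : F // a * β ^ q - b * β = 0}
      = (P.rootSet F).ncard := by rw [← hroots]; exact Nat.card_coe_set_eq _
    _ ≤ P.natDegree := ncard_rootSet_le P F
    _ ≤ max q q := natDegree_sub_le_of_le (natDegree_C_mul_X_pow_le a q)
        ((natDegree_C_mul_le b X).trans (natDegree_X_le.trans hq.le))
    _ = q := max_self q

theorem natCard_zeros_le_of_eq_comp_mul_pow_sub_mul {F : Type*} [Field F] [Finite F]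
    {p s q : ℕ} [ExpChar F p] (hq : q = p ^ s) (a b : F) {φ ψ : F → F}
    (h : ∀ β, φ β = ψ (a * β ^ q - b * β)) :
    Nat.card {β // φ β = 0} ≤
      Nat.card {β : F // a * β ^ q - b * β = 0} * Nat.card {δ // ψ δ = 0} := by
  let T : F →+ F := AddMonoidHom.mk' (fun β => a * β ^ q - b * β) fun x y => by
    rw [hq, add_pow_expChar_pow]; ring
  have hpre : {β | φ β = 0} = T ⁻¹' {δ | ψ δ = 0} := by
    ext β
    simp [h, T]
  calc Nat.card {β // φ β = 0} = Nat.card (T ⁻¹' {δ | ψ δ = 0}) := by rw [← hpre]; rfl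
    _ ≤ _ := T.natCard_preimage_le _

section Classes

open Finset

variable {F : Type*} [Field F] {q : ℕ} {ι : Type*}

/-- The `a i` lie in pairwise distinct classes `{β^(q-1) a | β ≠ 0}`. -/
def PairwiseNotConj (q : ℕ) (a : ι → F) : Prop :=
  ∀ i j (β β' : F), β ≠ 0 → β' ≠ 0 → β ^ (q - 1) * a i = β' ^ (q - 1) * a j → i = j

theorem pow_sub_one_mul_eq_of_mul_pow_sub_mul_eq_zero (hq : q ≠ 0) {a b β : F} (hβ : β ≠ 0)
    (h : a * β ^ q - b * β = 0) : β ^ (q - 1) * a = b :=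
  mul_right_cancel₀ hβ <| by
    rw [mul_right_comm, pow_sub_one_mul hq]
    linear_combination h

variable [Fintype ι] {a : ι → F}

theorem prod_natCard_mul_pow_sub_mul_le (hq : 1 < q) (ha : ∀ i, a i ≠ 0)
    (hconj : PairwiseNotConj q a) (b : F) :
    ∏ i, Nat.card {β : F // a i * β ^ q - b * β = 0} ≤ q := by
  have hzero (i : ι) : a i * 0 ^ q - b * 0 = 0 := by simp [zero_pow (by omega : q ≠ 0)]
  by_cases hroot : ∃ i, ∃ β ≠ 0, a i * β ^ q - b * β = 0
  · obtain ⟨i₀, β₀, hβ₀, hroot₀⟩ := hroot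
    rw [prod_eq_single i₀ _ (by simp)]
    · exact natCard_mul_pow_sub_mul_eq_zero_le hq (ha i₀) b
    intro i _ hi
    refine natCard_zeros_eq_one (hzero i) fun β hβ0 hβ => hi (hconj i i₀ β β₀ hβ0 hβ₀ ?_)
    rw [pow_sub_one_mul_eq_of_mul_pow_sub_mul_eq_zero (by omega) hβ0 hβ,
      pow_sub_one_mul_eq_of_mul_pow_sub_mul_eq_zero (by omega) hβ₀ hroot₀]
  · push Not at hroot
    rw [prod_eq_one fun i _ => natCard_zeros_eq_one (hzero i) (hroot i)]
    exact hq.le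

theorem prod_natCard_linEval_le [Finite F] {p s : ℕ} [ExpChar F p] (hq : q = p ^ s)
    (hq1 : 1 < q) (ha : ∀ i, a i ≠ 0) (hconj : PairwiseNotConj q a) :
    ∀ (e : ℕ) (f : ℕ → F), f e ≠ 0 →
      ∏ i, Nat.card {β : F // linEval q f e (a i) β = 0} ≤ q ^ e := by
  have hzero := linEval_zero_right (F := F) (by omega : q ≠ 0)
  intro e
  induction e with
  | zero =>
    intro f hf
    refine (prod_eq_one fun i _ => natCard_zeros_eq_one (hzero f 0 (a i)) fun β hβ => ?_).le
    simpa [linEval, skewN, hf] using hβ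
  | succ e ih =>
    intro f hf
    by_cases hroot : ∃ i, ∃ β ≠ 0, linEval q f (e + 1) (a i) β = 0
    · obtain ⟨i₀, β₀, hβ₀, hroot₀⟩ := hroot
      set b := β₀ ^ (q - 1) * a i₀
      obtain ⟨h, r, hh, hdiv⟩ := exists_linEval_eq_linEval_sub hq b e f
      have hr : r = 0 := by
        have hb : a i₀ * β₀ ^ q - b * β₀ = 0 := by
          rw [mul_right_comm, pow_sub_one_mul (by omega)]; ring
        have := hdiv (a i₀) β₀
        rw [hroot₀, hb, hzero, zero_add] at this
        exact (mul_eq_zero.mp this.symm).resolve_right hβ₀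
      calc ∏ i, Nat.card {β : F // linEval q f (e + 1) (a i) β = 0}
          ≤ ∏ i, (Nat.card {β : F // a i * β ^ q - b * β = 0} *
              Nat.card {β : F // linEval q h e (a i) β = 0}) :=
            prod_le_prod' fun i _ => natCard_zeros_le_of_eq_comp_mul_pow_sub_mul hq (a i) b
              fun β => by rw [hdiv, hr, zero_mul, add_zero]
        _ = (∏ i, Nat.card {β : F // a i * β ^ q - b * β = 0}) *
              ∏ i, Nat.card {β : F // linEval q h e (a i) β = 0} := prod_mul_distrib
        _ ≤ q * q ^ e :=
          Nat.mul_le_mul (prod_natCard_mul_pow_sub_mul_le hq1 ha hconj b) (ih h (hh ▸ hf))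
        _ = q ^ (e + 1) := (pow_succ' q e).symm
    · push Not at hroot
      rw [prod_eq_one fun i _ => natCard_zeros_eq_one (hzero f _ (a i)) (hroot i)]
      exact Nat.one_le_pow _ _ (by omega)

theorem pairwiseNotConj_pow [Fintype F] {γ : F} (hγ : orderOf γ = Fintype.card F - 1)
    (hdvd : q - 1 ∣ Fintype.card F - 1) :
    PairwiseNotConj q fun i : Fin (q - 1) => γ ^ (i : ℕ) := by
  intro i j β β' hβ hβ' h
  obtain ⟨m, hm⟩ := hdvd
  have hm0 : 0 < m := Nat.pos_of_ne_zero <| by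
    rintro rfl
    have := Fintype.one_lt_card (α := F)
    omega
  -- raising to the power `m` kills the `(q-1)`-th powers and keeps `γ^(i m)` below the order of `γ`
  have hγm : γ ^ ((i : ℕ) * m) = γ ^ ((j : ℕ) * m) := by
    have hpow (x : F) (hx : x ≠ 0) : (x ^ (q - 1)) ^ m = 1 := by
      rw [← pow_mul, ← hm, FiniteField.pow_card_sub_one_eq_one x hx]
    simpa [mul_pow, hpow β hβ, hpow β' hβ', ← pow_mul, mul_comm] using congr_arg (· ^ m) h
  have hlt (k : Fin (q - 1)) : (k : ℕ) * m ∈ Set.Iio (orderOf γ) := by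
    rw [Set.mem_Iio, hγ, hm]
    exact Nat.mul_lt_mul_of_pos_right k.2 hm0
  exact Fin.ext (Nat.eq_of_mul_eq_mul_right hm0 (pow_injOn_Iio_orderOf (hlt i) (hlt j) hγm))

end Classes

theorem exists_expChar_pow_eq_of_card_eq_pow {F : Type*} [Field F] [Fintype F] {q t : ℕ}
    (hF : Fintype.card F = q ^ t) : ∃ p k, ExpChar F p ∧ q = p ^ k := by
  obtain ⟨p, _, n, hp, hcard⟩ := FiniteField.card' F
  have : Fact p.Prime := ⟨hp⟩
  have ht : t ≠ 0 := by
    rintro rfl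
    simpa [hF] using Fintype.one_lt_card (α := F)
  obtain ⟨k, -, hk⟩ := (Nat.dvd_prime_pow hp).1 (hcard ▸ hF ▸ dvd_pow_self q ht)
  exact ⟨p, k, inferInstance, hk⟩

theorem sum_ker_dim_over_classes_le_deg_general (q t d : ℕ)
    (F : Type*) [Field F] [Fintype F] (hF : Fintype.card F = q ^ t)
    (γ : F) (hγ : orderOf γ = q ^ t - 1)
    (f : Fin (d + 1) → F) (hfd : f (Fin.last d) ≠ 0)
    (dims : Fin (q - 1) → ℕ)
    (hdims : ∀ i : Fin (q - 1),
      Nat.card {β : F // Dmap q f (γ ^ (i : ℕ)) β = 0} = q ^ dims i) :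
    ∑ i, dims i ≤ d := by
  obtain ⟨p, k, _, hk⟩ := exists_expChar_pow_eq_of_card_eq_pow hF
  have hcard := Fintype.one_lt_card (α := F)
  have hq1 : 1 < q := by
    by_contra! h
    exact (hF ▸ hcard).not_ge (pow_le_one₀ (Nat.zero_le q) h)
  rw [← hF] at hγ
  have hγ0 : γ ≠ 0 := by
    rintro rfl
    rw [orderOf_zero] at hγ
    omega
  set g : ℕ → F := fun n => if h : n < d + 1 then f ⟨n, h⟩ else 0
  have hfg : f = fun i : Fin (d + 1) => g i :=
    funext fun i => by simp only [g, dif_pos i.2, Fin.eta]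
  have key := prod_natCard_linEval_le hk hq1 (fun i => pow_ne_zero _ hγ0)
    (pairwiseNotConj_pow hγ (hF ▸ Nat.sub_one_dvd_pow_sub_one q t)) d g
    (by simp only [g, dif_pos d.lt_succ_self]; exact hfd)
  refine (Nat.pow_le_pow_iff_right hq1).1 ?_
  calc q ^ ∑ i, dims i = ∏ i, q ^ dims i := (Finset.prod_pow_eq_pow_sum _ _ _).symm
    _ = ∏ i : Fin (q - 1), Nat.card {β : F // linEval q g d (γ ^ (i : ℕ)) β = 0} := by
      simp only [← hdims, hfg, Dmap_eq_linEval (by omega : q ≠ 0)]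
    _ ≤ q ^ d := key

/-- For a nonzero skew polynomial `f` of degree `d` and a primitive element `γ` of
`F_{q^t}`, the sum over `i = 0, …, q-2` of the `F_q`-dimensions of `ker D_{f,γ^i}`
(the dimension `dims i` being characterized by `|ker D_{f,γ^i}| = q^{dims i}`) is at
most `d`. -/
theorem sum_ker_dim_over_classes_le_deg (q t d : ℕ) (hq : IsPrimePow q) (ht : 1 ≤ t)
    (F : Type*) [Field F] [Fintype F] (hF : Fintype.card F = q ^ t)
    (γ : F) (hγ : orderOf γ = q ^ t - 1)
    (f : Fin (d + 1) → F) (hfd : f (Fin.last d) ≠ 0)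
    (dims : Fin (q - 1) → ℕ)
    (hdims : ∀ i : Fin (q - 1),
      Nat.card {β : F // Dmap q f (γ ^ (i : ℕ)) β = 0} = q ^ dims i) :
    ∑ i, dims i ≤ d :=
  sum_ker_dim_over_classes_le_deg_general q t d F hF γ hγ f hfd dims hdims
end
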